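/- For every α ∈ (0,1), Expected Shortfall ES_α is a coherent measure of risk on integrable random variables: it is monotone (X ≤ Y implies ES_α(Y) ≤ ES_α(X)), translation invariant (ES_α(X+c) = ES_α(X) − c), positively homogeneous (ES_α(λX) = λ·ES_α(X) for λ ≥ 0), and subadditive (ES_α(X+Y) ≤ ES_α(X) + ES_α(Y)). -/

import Mathlib

open MeasureTheory

/-- The lower quantile function of a measure on `ℝ`. -/
noncomputable def lq (μ : Measure ℝ) (u : ℝ) : ℝ :=
  sInf {x : ℝ | u ≤ (μ (Set.Iic x)).toReal}

/-- Expected Shortfall at level `α` of a random variable `X` on `(Ω, P)`. -/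
noncomputable def ES {Ω : Type*} [MeasurableSpace Ω] (P : Measure Ω) (α : ℝ)
    (X : Ω → ℝ) : ℝ :=
  -(1 / α) * ∫ u in Set.Ioo (0:ℝ) α, lq (P.map X) u

/-!
Write `q = F_X^←`. The quantile transform (`q` pushes Lebesgue measure on `(0,1)` forward to the
law of `X`) turns `𝔼(z - X)⁺` into `∫₀¹ (z - q(u))⁺ du`, and `(z - q(u))⁺ ≥ 1_{u<α} (z - q(u))`
with equality at `z = q(α)`. Hence `-α ES_α(X) = ∫₀^α q = max_z (α z - 𝔼(z - X)⁺)`.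
All four axioms are properties of this objective: it is monotone in `X`, it shifts and rescales
with `X`, and it is superadditive because `(z₁ + z₂ - X - Y)⁺ ≤ (z₁ - X)⁺ + (z₂ - Y)⁺`.
-/

open Set Filter ProbabilityTheory

theorem IsGreatest.range_comp_of_surjective {ι κ β γ : Type*} [Preorder β] [Preorder γ]
    {f : ι → β} {a : β} (hf : IsGreatest (range f) a) {m : β → γ} (hm : Monotone m)
    {φ : κ → ι} (hφ : φ.Surjective) : IsGreatest (range (m ∘ f ∘ φ)) (m a) := by
  rw [range_comp, hφ.range_comp]
  exact hm.map_isGreatest hf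

section Quantile

variable {μ : Measure ℝ} [IsProbabilityMeasure μ] {u : ℝ}

theorem lq_eq_sInf_cdf : lq μ u = sInf {x | u ≤ cdf μ x} := by
  simp only [lq, cdf_eq_real, measureReal_def]

theorem lq_le_iff_le_cdf (hu : u ∈ Ioo (0:ℝ) 1) {x : ℝ} : lq μ u ≤ x ↔ u ≤ cdf μ x := by
  rw [lq_eq_sInf_cdf]
  set S := {x | u ≤ cdf μ x}
  have hne : S.Nonempty := ((tendsto_cdf_atTop μ).eventually (eventually_ge_nhds hu.2)).exists
  have hbdd : BddBelow S := by
    obtain ⟨x₀, hx₀⟩ :=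
      eventually_atBot.1 ((tendsto_cdf_atBot μ).eventually (eventually_lt_nhds hu.1))
    refine ⟨x₀, fun y hy => le_of_not_gt fun hyx => ?_⟩
    exact (hx₀ y hyx.le).not_ge hy
  refine ⟨fun h => le_trans ?_ ((cdf μ).mono h), fun h => csInf_le hbdd h⟩
  -- right continuity: `cdf μ (sInf S)` is the infimum of `cdf μ` to the right of `sInf S`
  rw [← (cdf μ).iInf_Ioi_eq]
  refine le_ciInf fun r => ?_
  obtain ⟨y, hyS, hyr⟩ := exists_lt_of_csInf_lt hne r.2
  exact hyS.trans ((cdf μ).mono hyr.le)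

theorem monotoneOn_lq : MonotoneOn (lq μ) (Ioo (0:ℝ) 1) := fun _ hu _ hv huv =>
  (lq_le_iff_le_cdf hu).2 (huv.trans ((lq_le_iff_le_cdf hv).1 le_rfl))

theorem aemeasurable_lq : AEMeasurable (lq μ) (volume.restrict (Ioo (0:ℝ) 1)) :=
  aemeasurable_restrict_of_monotoneOn measurableSet_Ioo monotoneOn_lq

theorem map_lq_restrict_Ioo : (volume.restrict (Ioo (0:ℝ) 1)).map (lq μ) = μ := by
  have : IsProbabilityMeasure (volume.restrict (Ioo (0:ℝ) 1)) := ⟨by simp [Real.volume_Ioo]⟩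
  have := Measure.isProbabilityMeasure_map (aemeasurable_lq (μ := μ))
  refine Measure.ext_of_Iic _ _ fun x => ?_
  rw [Measure.map_apply_of_aemeasurable aemeasurable_lq measurableSet_Iic,
    Measure.restrict_apply₀ (aemeasurable_lq.nullMeasurable measurableSet_Iic), ← ofReal_cdf]
  have hpre : lq μ ⁻¹' Iic x ∩ Ioo 0 1 = Iic (cdf μ x) ∩ Ioo 0 1 := by
    ext u
    simp only [mem_inter_iff, mem_preimage, mem_Iic, and_congr_left_iff]
    exact fun hu => lq_le_iff_le_cdf hu
  -- squeezed between `Ioo 0 (cdf μ x)` and `Ioc 0 (cdf μ x)`, both of length `cdf μ x`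
  rw [hpre]
  refine le_antisymm ?_ ?_
  · calc volume (Iic (cdf μ x) ∩ Ioo 0 1) ≤ volume (Ioc 0 (cdf μ x)) :=
          measure_mono fun u hu => ⟨hu.2.1, hu.1⟩
      _ = ENNReal.ofReal (cdf μ x) := by rw [Real.volume_Ioc, sub_zero]
  · calc ENNReal.ofReal (cdf μ x) = volume (Ioo 0 (cdf μ x)) := by rw [Real.volume_Ioo, sub_zero]
      _ ≤ volume (Iic (cdf μ x) ∩ Ioo 0 1) :=
          measure_mono fun u hu => ⟨hu.2.le, hu.1, hu.2.trans_le (cdf_le_one μ x)⟩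

theorem setIntegral_comp_lq {f : ℝ → ℝ} (hf : AEStronglyMeasurable f μ) :
    ∫ u in Ioo (0:ℝ) 1, f (lq μ u) = ∫ x, f x ∂μ := by
  conv_rhs => rw [← map_lq_restrict_Ioo (μ := μ)]
  rw [integral_map aemeasurable_lq (by rwa [map_lq_restrict_Ioo])]

theorem integrableOn_lq (hμ : Integrable id μ) : IntegrableOn (lq μ) (Ioo (0:ℝ) 1) := by
  rw [← map_lq_restrict_Ioo (μ := μ)] at hμ
  exact (integrable_map_measure aestronglyMeasurable_id aemeasurable_lq).1 hμ

end Quantile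

section Objective

variable {Ω : Type*} [MeasurableSpace Ω] {P : Measure Ω} {α : ℝ}

/-- For the pinball score `S(z, y) = (1_{y ≤ z} - α) (z - y)` this is `α 𝔼[X] - 𝔼[S(z, X)]`:
maximising it in `z` is minimising the expected score. -/
noncomputable def esObjective (P : Measure Ω) (α : ℝ) (X : Ω → ℝ) (z : ℝ) : ℝ :=
  α * z - ∫ ω, max (z - X ω) 0 ∂P

theorem isGreatest_esObjective_setIntegral_lq {μ : Measure ℝ} [IsProbabilityMeasure μ]
    (hα : α ∈ Ioo (0:ℝ) 1) (hμ : Integrable id μ) :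
    IsGreatest (range (esObjective μ α id)) (∫ u in Ioo (0:ℝ) α, lq μ u) := by
  have hsub : Ioo (0:ℝ) α ⊆ Ioo 0 1 := Ioo_subset_Ioo_right hα.2.le
  have hlq : IntegrableOn (lq μ) (Ioo (0:ℝ) 1) := integrableOn_lq hμ
  have hconst (z : ℝ) : IntegrableOn (fun _ => z) (Ioo (0:ℝ) 1) :=
    integrableOn_const measure_Ioo_lt_top.ne
  have hlin (z : ℝ) : ∫ u in Ioo (0:ℝ) α, (z - lq μ u) = α * z - ∫ u in Ioo (0:ℝ) α, lq μ u := by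
    rw [integral_sub ((hconst z).mono_set hsub) (hlq.mono_set hsub),
      setIntegral_const, measureReal_def, Real.volume_Ioo, sub_zero,
      ENNReal.toReal_ofReal hα.1.le, smul_eq_mul]
  have hquantile (z : ℝ) :
      esObjective μ α id z = α * z - ∫ u in Ioo (0:ℝ) 1, max (z - lq μ u) 0 := by
    rw [esObjective]
    congr 1
    exact (setIntegral_comp_lq (f := fun x => max (z - x) 0) (by fun_prop)).symm
  refine ⟨⟨lq μ α, ?_⟩, ?_⟩
  · set q := lq μ α
    have hzero : ∀ u ∈ Ioo (0:ℝ) 1 \ Ioo 0 α, max (q - lq μ u) 0 = 0 := fun u hu =>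
      max_eq_right (sub_nonpos.2 (monotoneOn_lq hα hu.1 (not_lt.1 fun h => hu.2 ⟨hu.1.1, h⟩)))
    have hpos : ∀ u ∈ Ioo (0:ℝ) α, max (q - lq μ u) 0 = q - lq μ u := fun u hu =>
      max_eq_left (sub_nonneg.2 (monotoneOn_lq (hsub hu) hα hu.2.le))
    rw [hquantile, setIntegral_eq_of_subset_of_forall_sdiff_eq_zero measurableSet_Ioo hsub hzero,
      setIntegral_congr_fun measurableSet_Ioo hpos, hlin]
    ring
  · rintro _ ⟨z, rfl⟩
    have hmax : IntegrableOn (fun u => max (z - lq μ u) 0) (Ioo (0:ℝ) 1) :=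
      ((hconst z).sub hlq).pos_part
    have hbound :
        α * z - ∫ u in Ioo (0:ℝ) α, lq μ u ≤ ∫ u in Ioo (0:ℝ) 1, max (z - lq μ u) 0 := by
      rw [← hlin]
      calc ∫ u in Ioo (0:ℝ) α, (z - lq μ u) ≤ ∫ u in Ioo (0:ℝ) α, max (z - lq μ u) 0 :=
            integral_mono (((hconst z).sub hlq).mono_set hsub)
              (hmax.mono_set hsub) fun u => le_max_left _ _
        _ ≤ ∫ u in Ioo (0:ℝ) 1, max (z - lq μ u) 0 :=
            setIntegral_mono_set hmax (.of_forall fun u => le_max_right _ _) hsub.eventuallyLE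
    rw [hquantile]
    linarith

theorem esObjective_map {X : Ω → ℝ} (hX : AEMeasurable X P) :
    esObjective (P.map X) α id = esObjective P α X := by
  funext z
  rw [esObjective, esObjective, integral_map hX (by fun_prop)]
  rfl

theorem esObjective_add_const (X : Ω → ℝ) (c z : ℝ) :
    esObjective P α (fun ω => X ω + c) z = esObjective P α X (z - c) + α * c := by
  simp only [esObjective, sub_add_eq_sub_sub_swap]
  ring

theorem esObjective_const_mul (X : Ω → ℝ) {l : ℝ} (hl : 0 < l) (z : ℝ) :
    esObjective P α (fun ω => l * X ω) z = l * esObjective P α X (z / l) := by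
  have hmax (ω : Ω) : max (z - l * X ω) 0 = l * max (z / l - X ω) 0 := by
    rw [mul_max_of_nonneg _ _ hl.le, mul_sub, mul_div_cancel₀ _ hl.ne', mul_zero]
  simp only [esObjective, hmax, integral_const_mul]
  field_simp

variable [IsProbabilityMeasure P] {X Y : Ω → ℝ}

theorem integrable_max_const_sub (hX : Integrable X P) (z : ℝ) :
    Integrable (fun ω => max (z - X ω) 0) P :=
  ((integrable_const z).sub hX).pos_part

theorem esObjective_mono (hX : Integrable X P) (hY : Integrable Y P) (h : ∀ ω, X ω ≤ Y ω)
    (z : ℝ) : esObjective P α X z ≤ esObjective P α Y z := by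
  have := integral_mono (integrable_max_const_sub hY z) (integrable_max_const_sub hX z)
    fun ω => max_le_max_right 0 (sub_le_sub_left (h ω) z)
  simp only [esObjective]
  linarith

theorem esObjective_add_le (hX : Integrable X P) (hY : Integrable Y P) (z₁ z₂ : ℝ) :
    esObjective P α X z₁ + esObjective P α Y z₂ ≤
      esObjective P α (fun ω => X ω + Y ω) (z₁ + z₂) := by
  have hX' := integrable_max_const_sub hX z₁
  have hY' := integrable_max_const_sub hY z₂
  have hXY := integrable_max_const_sub (X := fun ω => X ω + Y ω) (hX.add hY) (z₁ + z₂)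
  have hpos (ω : Ω) : max (z₁ + z₂ - (X ω + Y ω)) 0 ≤ max (z₁ - X ω) 0 + max (z₂ - Y ω) 0 :=
    max_le (by linarith [le_max_left (z₁ - X ω) 0, le_max_left (z₂ - Y ω) 0])
      (add_nonneg (le_max_right _ _) (le_max_right _ _))
  have : ∫ ω, max (z₁ + z₂ - (X ω + Y ω)) 0 ∂P ≤
      ∫ ω, max (z₁ - X ω) 0 ∂P + ∫ ω, max (z₂ - Y ω) 0 ∂P := by
    rw [← integral_add hX' hY']
    exact integral_mono hXY (hX'.add hY') hpos
  simp only [esObjective]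
  linarith

theorem isGreatest_esObjective (hα : α ∈ Ioo (0:ℝ) 1) (hX : Integrable X P) :
    IsGreatest (range (esObjective P α X)) (-(α * ES P α X)) := by
  have := Measure.isProbabilityMeasure_map (μ := P) hX.aemeasurable
  have hid : Integrable id (P.map X) :=
    (integrable_map_measure aestronglyMeasurable_id hX.aemeasurable).2 hX
  have hES : -(α * ES P α X) = ∫ u in Ioo (0:ℝ) α, lq (P.map X) u := by
    rw [ES]
    field_simp [hα.1.ne']
  rw [hES, ← esObjective_map hX.aemeasurable]
  exact isGreatest_esObjective_setIntegral_lq hα hid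

end Objective

section Coherence

variable {Ω : Type*} [MeasurableSpace Ω] {P : Measure Ω} [IsProbabilityMeasure P] {α : ℝ}
  {X Y : Ω → ℝ}

theorem ES_anti (hα : α ∈ Ioo (0:ℝ) 1) (hX : Integrable X P) (hY : Integrable Y P)
    (h : ∀ ω, X ω ≤ Y ω) : ES P α Y ≤ ES P α X := by
  obtain ⟨z, hz⟩ := (isGreatest_esObjective hα hX).1
  have hzY := (isGreatest_esObjective hα hY).2 ⟨z, rfl⟩
  have := esObjective_mono (α := α) hX hY h z
  exact le_of_mul_le_mul_left (by linarith) hα.1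

theorem ES_add_const (hα : α ∈ Ioo (0:ℝ) 1) (hX : Integrable X P) (c : ℝ) :
    ES P α (fun ω => X ω + c) = ES P α X - c := by
  have hshift : esObjective P α (fun ω => X ω + c) = (· + α * c) ∘ esObjective P α X ∘ (· - c) :=
    funext (esObjective_add_const X c)
  have h := isGreatest_esObjective (X := fun ω => X ω + c) hα (hX.add (integrable_const c))
  rw [hshift] at h
  have := h.unique <| (isGreatest_esObjective hα hX).range_comp_of_surjective
    (fun _ _ h => add_le_add_left h _) fun y => ⟨y + c, add_sub_cancel_right y c⟩
  exact mul_left_cancel₀ hα.1.ne' (by linarith)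

theorem ES_const_mul_of_pos (hα : α ∈ Ioo (0:ℝ) 1) (hX : Integrable X P) {l : ℝ} (hl : 0 < l) :
    ES P α (fun ω => l * X ω) = l * ES P α X := by
  have hscale : esObjective P α (fun ω => l * X ω) = (l * ·) ∘ esObjective P α X ∘ (· / l) :=
    funext (esObjective_const_mul X hl)
  have h := isGreatest_esObjective hα (hX.const_mul l)
  rw [hscale] at h
  have := h.unique <| (isGreatest_esObjective hα hX).range_comp_of_surjective
    (monotone_mul_left_of_nonneg hl.le) fun y => ⟨y * l, mul_div_cancel_right₀ y hl.ne'⟩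
  exact mul_left_cancel₀ hα.1.ne' (by linarith)

theorem ES_const_mul (hα : α ∈ Ioo (0:ℝ) 1) (hX : Integrable X P) {l : ℝ} (hl : 0 ≤ l) :
    ES P α (fun ω => l * X ω) = l * ES P α X := by
  rcases hl.lt_or_eq with hl | rfl
  · exact ES_const_mul_of_pos hα hX hl
  -- homogeneity at `l = 2` forces `ES` of the zero variable to vanish
  have h := ES_const_mul_of_pos hα (integrable_const (0:ℝ) : Integrable (fun _ => (0:ℝ)) P) two_pos
  simp only [mul_zero, zero_mul] at h ⊢
  linarith

theorem ES_add_le (hα : α ∈ Ioo (0:ℝ) 1) (hX : Integrable X P) (hY : Integrable Y P) :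
    ES P α (fun ω => X ω + Y ω) ≤ ES P α X + ES P α Y := by
  obtain ⟨z₁, h₁⟩ := (isGreatest_esObjective hα hX).1
  obtain ⟨z₂, h₂⟩ := (isGreatest_esObjective hα hY).1
  have hXY := (isGreatest_esObjective (X := fun ω => X ω + Y ω) hα (hX.add hY)).2 ⟨z₁ + z₂, rfl⟩
  have := esObjective_add_le (α := α) hX hY z₁ z₂
  exact le_of_mul_le_mul_left (by linarith) hα.1

end Coherence

theorem expected_shortfall_coherent_general {Ω : Type*} [MeasurableSpace Ω]
    (P : Measure Ω) [IsProbabilityMeasure P]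
    (α : ℝ) (hα : α ∈ Set.Ioo (0:ℝ) 1)
    (X Y : Ω → ℝ)
    (hX : Integrable X P) (hY : Integrable Y P) :
    ((∀ ω, X ω ≤ Y ω) → ES P α Y ≤ ES P α X) ∧
    (∀ c : ℝ, ES P α (fun ω => X ω + c) = ES P α X - c) ∧
    (∀ l : ℝ, 0 ≤ l → ES P α (fun ω => l * X ω) = l * ES P α X) ∧
    (ES P α (fun ω => X ω + Y ω) ≤ ES P α X + ES P α Y) :=
  ⟨ES_anti hα hX hY, ES_add_const hα hX, fun _ => ES_const_mul hα hX, ES_add_le hα hX hY⟩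

/-- Expected Shortfall is a coherent measure of risk: monotone, translation invariant,
positively homogeneous and subadditive. -/
theorem expected_shortfall_coherent {Ω : Type*} [MeasurableSpace Ω]
    (P : Measure Ω) [IsProbabilityMeasure P]
    (α : ℝ) (hα : α ∈ Set.Ioo (0:ℝ) 1)
    (X Y : Ω → ℝ) (hXm : Measurable X) (hYm : Measurable Y)
    (hX : Integrable X P) (hY : Integrable Y P) :
    ((∀ ω, X ω ≤ Y ω) → ES P α Y ≤ ES P α X) ∧
    (∀ c : ℝ, ES P α (fun ω => X ω + c) = ES P α X - c) ∧
    (∀ l : ℝ, 0 ≤ l → ES P α (fun ω => l * X ω) = l * ES P α X) ∧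
    (ES P α (fun ω => X ω + Y ω) ≤ ES P α X + ES P α Y) :=
  expected_shortfall_coherent_general P α hα X Y hX hY
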